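/- Let C > 0, and for each k let νₖ = (1/dₖ) Σᵢ δ_{λₖ,ᵢ/k} be a probability measure on ℝ with all λₖ,ᵢ/k ≤ C, where dₖ grows at least linearly in k. Suppose there exist constants d₀, m, k₀, C₄ > 0 such that for all k > k₀ and all i with d₀ < i ≤ d₀ + (k−k₀−1)m: λₖ,ᵢ/k ≥ 6 log((k − k₀ − ⌈(i−d₀)/m⌉)/k) − C₄, and the number of indices i outside this range with λₖ,ᵢ/k finite contributes at most d₀ + m. Then the family (νₖ) is uniformly tight: for every ε > 0 there exist a > 0 and k₁ such that νₖ((−∞, −a)) < ε for all k ≥ k₁. -/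

import Mathlib

/-!
Fix `δ > 0` and take `a ≥ C₄ - 6 log δ`. An index inside the window `d₀ < i ≤ d₀ + (k - k₀ - 1) m`
with `λₖ,ᵢ/k < -a` has `(k - k₀ - ⌈(i - d₀)/m⌉)/k < δ`, so it lies in the top `δ k m` indices of the
window. Hence at most `d₀ + m + 1 + δ k m` indices lie below `-a`, and dividing by `dₖ ≥ c k` gives
`νₖ(-∞, -a) ≤ (d₀ + m + 1)/(c k) + δ m / c`, which is `< ε` for `δ` small and `k` large.
-/

open Finset Real Filter

lemma card_filter_mem_Ioc_le {N : ℕ} {X Y : ℝ} (hXY : X ≤ Y) :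
    (#{i : Fin N | X < (i : ℕ) + 1 ∧ ((i : ℕ) + 1 : ℝ) ≤ Y} : ℝ) ≤ Y - X + 1 := by
  have hinj : #{i : Fin N | X < (i : ℕ) + 1 ∧ ((i : ℕ) + 1 : ℝ) ≤ Y} ≤ #(Ioc ⌊X⌋ ⌊Y⌋) := by
    refine card_le_card_of_injOn (fun i => ((i : ℕ) + 1 : ℤ)) (fun i hi => ?_) ?_
    · simp only [coe_filter, mem_univ, true_and, Set.mem_ofPred_eq] at hi
      simp only [coe_Ioc, Set.mem_Ioc, Int.floor_lt, Int.le_floor]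
      exact_mod_cast hi
    · intro i _ j _ hij
      exact Fin.ext (by simpa using hij)
  have hIoc : (#(Ioc ⌊X⌋ ⌊Y⌋) : ℝ) = ⌊Y⌋ - ⌊X⌋ := by
    exact_mod_cast Int.card_Ioc_of_le _ _ (Int.floor_le_floor hXY)
  have hinj' : (#{i : Fin N | X < (i : ℕ) + 1 ∧ ((i : ℕ) + 1 : ℝ) ≤ Y} : ℝ) ≤ #(Ioc ⌊X⌋ ⌊Y⌋) := by
    exact_mod_cast hinj
  linarith [Int.floor_le Y, Int.lt_floor_add_one X]

lemma sub_mul_lt_of_log_sub_ceil_div_lt {k k₀ m x δ : ℝ} (hk : 0 < k) (hm : 0 < m) (hδ : 0 < δ)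
    (h : log ((k - k₀ - ⌈x / m⌉) / k) < log δ) : (k - k₀ - δ * k - 1) * m < x := by
  have hδ' : (k - k₀ - ⌈x / m⌉) / k < δ := by
    by_contra! hle
    exact (log_le_log hδ hle).not_gt h
  have hlt : k - k₀ - ⌈x / m⌉ < δ * k := (div_lt_iff₀ hk).1 hδ'
  have hceil : (⌈x / m⌉ : ℝ) < x / m + 1 := Int.ceil_lt_add_one _
  exact (lt_div_iff₀ hm).1 (by linarith)

lemma card_filter_lt_neg_le {N : ℕ} (μ : Fin N → ℝ) (d₀ m k₀ : ℕ) {k C₄ δ a : ℝ}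
    (hk : 0 < k) (hm : 0 < m) (hδ : 0 < δ) (ha : C₄ - 6 * log δ ≤ a)
    (hlow : ∀ i : Fin N, (d₀ : ℝ) < (i : ℕ) + 1 → ((i : ℕ) + 1 : ℝ) ≤ d₀ + (k - k₀ - 1) * m →
      6 * log ((k - k₀ - (⌈(((i : ℕ) + 1 : ℝ) - d₀) / (m : ℝ)⌉ : ℤ)) / k) - C₄ ≤ μ i)
    (hout : #{i : Fin N | ¬((d₀ : ℝ) < (i : ℕ) + 1 ∧ ((i : ℕ) + 1 : ℝ) ≤ d₀ + (k - k₀ - 1) * m)}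
      ≤ d₀ + m) :
    (#{i : Fin N | μ i < -a} : ℝ) ≤ d₀ + m + 1 + δ * k * m := by
  set X : ℝ := d₀ + (k - k₀ - δ * k - 1) * m
  set Y : ℝ := d₀ + (k - k₀ - 1) * m
  set Out : Finset (Fin N) := {i | ¬((d₀ : ℝ) < (i : ℕ) + 1 ∧ ((i : ℕ) + 1 : ℝ) ≤ Y)}
  set Top : Finset (Fin N) := {i | X < (i : ℕ) + 1 ∧ ((i : ℕ) + 1 : ℝ) ≤ Y}
  have hsub : ({i | μ i < -a} : Finset (Fin N)) ⊆ Out ∪ Top := by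
    intro i hi
    simp only [Out, Top, mem_union, mem_filter, mem_univ, true_and] at hi ⊢
    by_cases hwin : (d₀ : ℝ) < (i : ℕ) + 1 ∧ ((i : ℕ) + 1 : ℝ) ≤ Y
    · have hlog : log ((k - k₀ - (⌈(((i : ℕ) + 1 : ℝ) - d₀) / (m : ℝ)⌉ : ℤ)) / k) < log δ := by
        linarith [hlow i hwin.1 hwin.2]
      have := sub_mul_lt_of_log_sub_ceil_div_lt hk (by exact_mod_cast hm) hδ hlog
      exact Or.inr ⟨by linarith, hwin.2⟩
    · exact Or.inl hwin
  have hcard : (#{i : Fin N | μ i < -a} : ℝ) ≤ #Out + #Top := by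
    exact_mod_cast (card_le_card hsub).trans (card_union_le _ _)
  have hout' : (#Out : ℝ) ≤ d₀ + m := by exact_mod_cast hout
  have hwidth : Y - X = δ * k * m := by ring
  have hXY : X ≤ Y := by linarith [show 0 ≤ δ * k * m by positivity]
  linarith [card_filter_mem_Ioc_le (N := N) hXY]

theorem stmt_8_general (d : ℕ → ℕ)
    (lam : (k : ℕ) → Fin (d k) → ℝ)
    (hlin : ∃ c : ℝ, 0 < c ∧ ∃ K : ℕ, ∀ k ≥ K, c * (k : ℝ) ≤ (d k : ℝ))
    (d₀ m k₀ : ℕ) (hm : 0 < m)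
    (C₄ : ℝ)
    (hlow : ∀ k > k₀, ∀ i : Fin (d k),
      (d₀ : ℝ) < (i : ℕ) + 1 → ((i : ℕ) + 1 : ℝ) ≤ d₀ + ((k : ℝ) - k₀ - 1) * m →
      6 * Real.log (((k : ℝ) - k₀ - (⌈(((i : ℕ) + 1 : ℝ) - d₀) / (m : ℝ)⌉ : ℤ)) / k) - C₄
        ≤ lam k i / k)
    (hout : ∀ k > k₀,
      (Finset.univ.filter (fun i : Fin (d k) =>
        ¬((d₀ : ℝ) < (i : ℕ) + 1 ∧ ((i : ℕ) + 1 : ℝ) ≤ d₀ + ((k : ℝ) - k₀ - 1) * m))).card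
        ≤ d₀ + m) :
    ∀ ε : ℝ, 0 < ε → ∃ a : ℝ, 0 < a ∧ ∃ k₁ : ℕ, ∀ k ≥ k₁,
      ((Finset.univ.filter (fun i : Fin (d k) => lam k i / k < -a)).card : ℝ) / (d k) < ε := by
  intro ε hε
  obtain ⟨c, hc, K, hK⟩ := hlin
  set δ := c * ε / (4 * m) with hδ
  refine ⟨max 1 (C₄ - 6 * log δ), by positivity, ?_⟩
  have hsmall : ∀ᶠ k : ℕ in atTop, (d₀ + m + 1) / c / k < ε / 2 :=
    (tendsto_const_div_atTop_nhds_zero_nat _).eventually (gt_mem_nhds (half_pos hε))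
  obtain ⟨k₁, hk₁⟩ := eventually_atTop.1
    (((eventually_ge_atTop K).and (eventually_gt_atTop k₀)).and hsmall)
  refine ⟨k₁, fun k hk => ?_⟩
  obtain ⟨⟨hKk, hk₀k⟩, hsmallk⟩ := hk₁ k hk
  have hk : (0 : ℝ) < k := by exact_mod_cast (Nat.zero_le k₀).trans_lt hk₀k
  have hbad := card_filter_lt_neg_le (fun i => lam k i / k) d₀ m k₀ (δ := δ)
    (a := max 1 (C₄ - 6 * log δ)) hk hm (by positivity) (le_max_right _ _)
    (hlow k hk₀k) (hout k hk₀k)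
  calc _ ≤ ((d₀ + m + 1) + δ * k * m) / (c * k) :=
        div_le_div₀ (by positivity) hbad (by positivity) (hK k hKk)
    _ = (d₀ + m + 1) / c / k + ε / 4 := by rw [hδ]; field_simp
    _ < ε := by linarith

/-- Uniform tightness of the empirical measures `νₖ = (1/dₖ) ∑ᵢ δ_{λₖ,ᵢ/k}`: under the
upper bound `λₖ,ᵢ/k ≤ C`, at-least-linear growth of `dₖ`, and the lower bounds
`λₖ,ᵢ/k ≥ 6 log((k − k₀ − ⌈(i−d₀)/m⌉)/k) − C₄` for indices `d₀ < i ≤ d₀ + (k−k₀−1)m`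
(with at most `d₀ + m` indices outside this range), for every `ε > 0` there are
`a > 0` and `k₁` such that `νₖ((−∞,−a)) < ε` for all `k ≥ k₁`. -/
theorem stmt_8 (C : ℝ) (hC : 0 < C) (d : ℕ → ℕ)
    (lam : (k : ℕ) → Fin (d k) → ℝ)
    (hupper : ∀ (k : ℕ) (i : Fin (d k)), lam k i / k ≤ C)
    (hlin : ∃ c : ℝ, 0 < c ∧ ∃ K : ℕ, ∀ k ≥ K, c * (k : ℝ) ≤ (d k : ℝ))
    (d₀ m k₀ : ℕ) (hd₀ : 0 < d₀) (hm : 0 < m) (hk₀ : 0 < k₀)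
    (C₄ : ℝ) (hC₄ : 0 < C₄)
    (hlow : ∀ k > k₀, ∀ i : Fin (d k),
      (d₀ : ℝ) < (i : ℕ) + 1 → ((i : ℕ) + 1 : ℝ) ≤ d₀ + ((k : ℝ) - k₀ - 1) * m →
      6 * Real.log (((k : ℝ) - k₀ - (⌈(((i : ℕ) + 1 : ℝ) - d₀) / (m : ℝ)⌉ : ℤ)) / k) - C₄
        ≤ lam k i / k)
    (hout : ∀ k > k₀,
      (Finset.univ.filter (fun i : Fin (d k) =>
        ¬((d₀ : ℝ) < (i : ℕ) + 1 ∧ ((i : ℕ) + 1 : ℝ) ≤ d₀ + ((k : ℝ) - k₀ - 1) * m))).card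
        ≤ d₀ + m) :
    ∀ ε : ℝ, 0 < ε → ∃ a : ℝ, 0 < a ∧ ∃ k₁ : ℕ, ∀ k ≥ k₁,
      ((Finset.univ.filter (fun i : Fin (d k) => lam k i / k < -a)).card : ℝ) / (d k) < ε :=
  stmt_8_general d lam hlin d₀ m k₀ hm C₄ hlow hout
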